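/- arXiv:2402.19234 — 6 statements merged into one kernel-verified Lean document; each statement's English description precedes it below -/
import Mathlib

section
/- For every integer a ≥ 2, the broadcast independence number of the oriented circulant graph C⃗(2a;1,a) equals a, and moreover equals the diameter of C⃗(2a;1,a). -/
/-!
From `u`, the vertex `u + w` of `C⃗(2a;1,a)` is reached using `w mod a` unit arcs and at most one
arc of length `a`, so every distance is at most `a`, with equality for the predecessor `u - 1`;
thus all eccentricities and the diameter equal `a`, and one vertex broadcasting at strength `a`
gives cost `a`. Conversely, let each vertex `u` broadcasting at strength `f u` claim the residues
`u, u + 1, …, u + f u - 1` modulo `a`. If the claims of distinct broadcasting vertices `u`, `v` met,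
say with `v ≡ u + j (mod a)` and `j < f u`, then `d(u, v) ≤ j + 1 ≤ f u`, contradicting independence;
so the claims are disjoint and the total cost is at most `a`.
-/

/-- Arc relation of the oriented circulant graph C⃗(n;1,a): arcs u → u+1 and u → u+a (mod n). -/
def circArc (n : ℕ) (a : ℤ) (u v : ZMod n) : Prop :=
  v = u + 1 ∨ v = u + (a : ZMod n)

/-- There is a directed walk of length k from u to v in C⃗(n;1,a). -/
def circSteps (n : ℕ) (a : ℤ) (u v : ZMod n) (k : ℕ) : Prop :=
  ∃ g : ℕ → ZMod n, g 0 = u ∧ g k = v ∧ ∀ i < k, circArc n a (g i) (g (i + 1))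

/-- Directed distance: length of a shortest directed path from u to v. -/
noncomputable def circDist (n : ℕ) (a : ℤ) (u v : ZMod n) : ℕ :=
  sInf {k | circSteps n a u v k}

/-- Eccentricity of a vertex: maximum distance from it to any vertex. -/
noncomputable def circEcc (n : ℕ) (a : ℤ) (u : ZMod n) : ℕ :=
  sSup {d | ∃ v, d = circDist n a u v}

/-- Diameter: maximum eccentricity. -/
noncomputable def circDiam (n : ℕ) (a : ℤ) : ℕ :=
  sSup {d | ∃ u, d = circEcc n a u}

/-- f is an independent broadcast on C⃗(n;1,a). -/
def IsIndepBroadcast (n : ℕ) (a : ℤ) (f : ZMod n → ℕ) : Prop :=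
  (∀ v, f v ≤ circEcc n a v) ∧
  ∀ u v : ZMod n, u ≠ v → 0 < f u → 0 < f v → f u < circDist n a u v

/-- Cost of a broadcast: sum of its values over all vertices. -/
def circCost (n : ℕ) (f : ZMod n → ℕ) : ℕ :=
  ∑ i ∈ Finset.range n, f (i : ZMod n)

/-- The broadcast independence number of C⃗(n;1,a). -/
noncomputable def betaB (n : ℕ) (a : ℤ) : ℕ :=
  sSup {c | ∃ f : ZMod n → ℕ, IsIndepBroadcast n a f ∧ c = circCost n f}

open Finset

theorem circSteps_iff {n : ℕ} {a : ℤ} {u v : ZMod n} {k : ℕ} :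
    circSteps n a u v k ↔ ∃ s t : ℕ, s + t = k ∧ v = u + s + t * (a : ZMod n) := by
  constructor
  · induction k generalizing v with
    | zero => rintro ⟨g, rfl, rfl, -⟩; exact ⟨0, 0, rfl, by simp⟩
    | succ k ih =>
      rintro ⟨g, rfl, rfl, harc⟩
      obtain ⟨s, t, hk, hv⟩ := ih ⟨g, rfl, rfl, fun i hi => harc i (by omega)⟩
      rcases harc k (by omega) with h | h
      · exact ⟨s + 1, t, by omega, by rw [h, hv]; push_cast; ring⟩
      · exact ⟨s, t + 1, by omega, by rw [h, hv]; push_cast; ring⟩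
  · rintro ⟨s, t, rfl, rfl⟩
    refine ⟨fun i => u + (min i s : ℕ) + (i - s : ℕ) * (a : ZMod n), by simp, by simp, fun i _ => ?_⟩
    dsimp only
    rcases lt_or_ge i s with h | h
    · left
      rw [min_eq_left h.le, min_eq_left h, Nat.sub_eq_zero_of_le h.le, Nat.sub_eq_zero_of_le h]
      push_cast; ring
    · right
      rw [min_eq_right h, min_eq_right (by omega), Nat.sub_add_comm h]
      push_cast; ring

theorem circDist_le_of_eq {n : ℕ} {a : ℤ} {u v : ZMod n} {s t : ℕ}
    (h : v = u + s + t * (a : ZMod n)) : circDist n a u v ≤ s + t :=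
  Nat.sInf_le (circSteps_iff.2 ⟨s, t, rfl, h⟩)

theorem le_circDist {n : ℕ} {a : ℤ} {u v : ZMod n} {m : ℕ} (hv : ∃ k, circSteps n a u v k)
    (h : ∀ s t : ℕ, v = u + s + t * (a : ZMod n) → m ≤ s + t) : m ≤ circDist n a u v :=
  le_csInf hv fun k hk => by
    obtain ⟨s, t, rfl, hst⟩ := circSteps_iff.1 hk
    exact h s t hst

theorem circCost_eq_sum {n : ℕ} [NeZero n] (f : ZMod n → ℕ) : circCost n f = ∑ v, f v :=
  sum_nbij' (fun m : ℕ => (m : ZMod n)) ZMod.val (fun _ _ => mem_univ _)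
    (fun v _ => mem_range.2 v.val_lt) (fun _ hm => ZMod.val_cast_of_lt (mem_range.1 hm))
    (fun v _ => ZMod.natCast_zmod_val v) (fun _ _ => rfl)

section DoubleCirculant

variable {a : ℕ} [NeZero a]

local notation "π" => ZMod.castHom (dvd_mul_left a 2) (ZMod a)

theorem circDist_le_val_castHom_add_one (u v : ZMod (2 * a)) :
    circDist (2 * a) a u v ≤ (π (v - u)).val + 1 := by
  set w := v - u
  have hv : v = u + w := by ring
  have hw : (π w).val = w.val % a := by
    rw [ZMod.castHom_apply, ZMod.cast_eq_val, ZMod.val_natCast]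
  rcases lt_or_ge w.val a with h | h
  · have := circDist_le_of_eq (a := a) (u := u) (v := v) (s := w.val) (t := 0)
      (by rw [hv]; push_cast; rw [ZMod.natCast_zmod_val]; ring)
    rw [hw, Nat.mod_eq_of_lt h]; omega
  · have := circDist_le_of_eq (a := a) (u := u) (v := v) (s := w.val - a) (t := 1)
      (by rw [hv]; push_cast [h]; rw [ZMod.natCast_zmod_val]; ring)
    rw [hw, Nat.mod_eq_sub_mod h, Nat.mod_eq_of_lt (by have := w.val_lt; omega)]; omega

theorem circDist_le (u v : ZMod (2 * a)) : circDist (2 * a) a u v ≤ a :=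
  (circDist_le_val_castHom_add_one u v).trans (ZMod.val_lt _)

theorem le_circDist_sub_one (u : ZMod (2 * a)) : a ≤ circDist (2 * a) a u (u - 1) := by
  have ha : 0 < a := Nat.pos_of_neZero a
  have h2a : ((2 * a : ℕ) : ZMod (2 * a)) = 0 := ZMod.natCast_self _
  refine le_circDist ⟨a - 1 + 1, circSteps_iff.2 ⟨a - 1, 1, rfl, ?_⟩⟩ fun s t hst => ?_
  · push_cast [Nat.one_le_iff_ne_zero.2 ha.ne'] at h2a ⊢
    linear_combination -h2a
  · by_contra hlt
    have hdvd : 2 * a ∣ s + 1 + t * a := (ZMod.natCast_eq_zero_iff _ _).1 (by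
      push_cast [Int.cast_natCast] at hst ⊢; linear_combination -hst)
    have hs : a ∣ s + 1 := (Nat.dvd_add_left (dvd_mul_left a t)).1 ((dvd_mul_left a 2).trans hdvd)
    have := Nat.le_of_dvd (by omega) hs
    obtain rfl : t = 0 := by omega
    have := Nat.le_of_dvd (by omega) hdvd
    omega

theorem circDist_sub_one (u : ZMod (2 * a)) : circDist (2 * a) a u (u - 1) = a :=
  (circDist_le u _).antisymm (le_circDist_sub_one u)

theorem circEcc_eq (u : ZMod (2 * a)) : circEcc (2 * a) a u = a :=
  IsGreatest.csSup_eq ⟨⟨u - 1, (circDist_sub_one u).symm⟩, by rintro _ ⟨v, rfl⟩; exact circDist_le u v⟩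

theorem circDiam_eq : circDiam (2 * a) a = a :=
  IsGreatest.csSup_eq ⟨⟨0, (circEcc_eq 0).symm⟩, by rintro _ ⟨u, rfl⟩; exact (circEcc_eq u).le⟩

theorem injOn_castHom_add {f : ZMod (2 * a) → ℕ} (hf : IsIndepBroadcast (2 * a) a f) :
    Set.InjOn (fun p : (_ : ZMod (2 * a)) × ℕ => π p.1 + p.2) (univ.sigma fun u => range (f u)) := by
  have hfa u : f u ≤ a := (hf.1 u).trans (circEcc_eq u).le
  rintro ⟨u, i⟩ hi ⟨v, j⟩ hj (h : π u + i = π v + j)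
  simp only [coe_sigma, Set.mem_sigma_iff, coe_univ, Set.mem_univ, coe_range, Set.mem_Iio,
    true_and] at hi hj
  wlog hji : j ≤ i generalizing u v i j
  · exact (this v j u i h.symm hj hi (by omega)).symm
  have hres : (π (v - u)).val = i - j := by
    rw [map_sub, show π v - π u = ((i - j : ℕ) : ZMod a) by push_cast [hji]; linear_combination -h]
    exact ZMod.val_cast_of_lt (by have := hfa u; omega)
  obtain rfl : u = v := by
    by_contra huv
    have := hf.2 u v huv (by omega) (by omega)
    have := circDist_le_val_castHom_add_one u v
    omega
  obtain rfl : i = j := by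
    simp only [sub_self, map_zero, ZMod.val_zero] at hres; omega
  rfl

theorem circCost_le {f : ZMod (2 * a) → ℕ} (hf : IsIndepBroadcast (2 * a) a f) :
    circCost (2 * a) f ≤ a :=
  calc circCost (2 * a) f = #(univ.sigma fun u => range (f u)) := by
        simp [circCost_eq_sum, card_sigma]
    _ ≤ #(univ : Finset (ZMod a)) :=
        card_le_card_of_injOn _ (fun _ _ => mem_coe.2 (mem_univ _)) (injOn_castHom_add hf)
    _ = a := ZMod.card a

theorem isIndepBroadcast_single : IsIndepBroadcast (2 * a) a (Pi.single 0 a) := by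
  have hsupp (w : ZMod (2 * a)) (hw : 0 < (Pi.single 0 a : ZMod (2 * a) → ℕ) w) : w = 0 := by
    by_contra hne
    simp [hne] at hw
  refine ⟨fun v => ?_, fun u v huv hu hv => (huv ((hsupp u hu).trans (hsupp v hv).symm)).elim⟩
  rw [circEcc_eq, Pi.single_apply]
  split_ifs <;> omega

theorem circCost_single : circCost (2 * a) (Pi.single 0 a) = a := by
  simp [circCost_eq_sum]

theorem betaB_eq : betaB (2 * a) a = a :=
  IsGreatest.csSup_eq ⟨⟨_, isIndepBroadcast_single, circCost_single.symm⟩,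
    by rintro _ ⟨f, hf, rfl⟩; exact circCost_le hf⟩

end DoubleCirculant

theorem stmt1 (a : ℕ) (ha : 2 ≤ a) :
    betaB (2 * a) (a : ℤ) = a ∧ betaB (2 * a) (a : ℤ) = circDiam (2 * a) (a : ℤ) := by
  have : NeZero a := ⟨by omega⟩
  exact ⟨betaB_eq, by rw [betaB_eq, circDiam_eq]⟩
end

section
/- For every integer a ≥ 2, the oriented circulant graphs C⃗(2a-1;1,a) and C⃗(2a-1;1,2) are isomorphic. -/
/-! Multiplication by an inverse `c` of `a` modulo `n` sends the `+1` arcs to `+c` arcs and the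
`+a` arcs to `+1` arcs, so it is an isomorphism `C⃗(n;1,a) ≅ C⃗(n;1,c)`. For `n = 2a - 1` the
inverse of `a` is `2`. -/

theorem circArc_iff_mul {n : ℕ} {a c : ℤ} (hca : (c : ZMod n) * a = 1) (u v : ZMod n) :
    circArc n a u v ↔ circArc n c (c * u) (c * v) := by
  have hc : IsUnit (c : ZMod n) := .of_mul_eq_one _ hca
  unfold circArc
  rw [← hc.mul_right_inj (c := u + 1), ← hc.mul_right_inj (c := u + a), mul_add, mul_add,
    mul_one, hca, or_comm]

theorem two_mul_eq_one_zmod_two_mul_sub_one {a : ℕ} (ha : 1 ≤ a) :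
    (2 : ZMod (2 * a - 1)) * a = 1 := by
  have h : ((2 * a - 1 + 1 : ℕ) : ZMod (2 * a - 1)) = 1 := by simp
  rwa [Nat.sub_add_cancel (by omega), Nat.cast_mul, Nat.cast_ofNat] at h

theorem stmt6 (a : ℕ) (ha : 2 ≤ a) :
    ∃ φ : ZMod (2 * a - 1) ≃ ZMod (2 * a - 1), ∀ u v : ZMod (2 * a - 1),
      circArc (2 * a - 1) (a : ℤ) u v ↔ circArc (2 * a - 1) 2 (φ u) (φ v) := by
  have h2a : ((2 : ℤ) : ZMod (2 * a - 1)) * ((a : ℤ) : ZMod (2 * a - 1)) = 1 := by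
    push_cast
    exact two_mul_eq_one_zmod_two_mul_sub_one (by omega)
  exact ⟨Units.mulLeft (Units.mkOfMulEqOne _ _ h2a), circArc_iff_mul h2a⟩
end

section
/- If n = qa + r with a ≥ 4, q ≥ 2 and 0 ≤ r ≤ a-1, then the diameter of the oriented circulant graph C⃗(n;1,a) is at most q + a - 2. -/
/-!
Write the offset `v - u` as `s * a + t` with `0 ≤ t < a`: `s` jumps of length `a` followed by
`t` unit steps reach `v`. Since `v - u < n = q * a + r`, either `s < q`, or `s = q` and `t < r ≤ a - 1`;
in both cases `s + t ≤ q + a - 2`.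
-/

namespace circSteps

variable {n : ℕ} {a : ℤ} {u v w : ZMod n} {k : ℕ}

theorem refl (n : ℕ) (a : ℤ) (u : ZMod n) : circSteps n a u u 0 :=
  ⟨fun _ => u, rfl, rfl, fun _ h => absurd h (Nat.not_lt_zero _)⟩

theorem snoc (h : circSteps n a u v k) (hvw : circArc n a v w) :
    circSteps n a u w (k + 1) := by
  obtain ⟨g, hg0, hgk, hg⟩ := h
  refine ⟨fun i => if i ≤ k then g i else w, by simpa using hg0, by simp, fun i hi => ?_⟩
  rcases Nat.lt_or_eq_of_le (Nat.lt_succ_iff.mp hi) with hik | rfl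
  · simpa [hik.le, Nat.succ_le_of_lt hik] using hg i hik
  · simpa [hgk] using hvw

theorem add_ones (h : circSteps n a u v k) (t : ℕ) :
    circSteps n a u (v + t) (k + t) := by
  induction t with
  | zero => simpa using h
  | succ t ih => simpa [add_assoc] using ih.snoc (Or.inl rfl)

theorem add_jumps (h : circSteps n a u v k) (s : ℕ) :
    circSteps n a u (v + s * a) (k + s) := by
  induction s with
  | zero => simpa using h
  | succ s ih => simpa [add_mul, add_assoc] using ih.snoc (Or.inr rfl)

end circSteps

theorem circDist_le_div_add_mod {n : ℕ} [NeZero n] (a : ℕ) (u v : ZMod n) :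
    circDist n a u v ≤ (v - u).val / a + (v - u).val % a := by
  refine Nat.sInf_le (show circSteps n a u v _ from ?_)
  convert ((circSteps.refl n a u).add_jumps ((v - u).val / a)).add_ones ((v - u).val % a) using 1
  · rw [Int.cast_natCast, ← Nat.cast_mul, add_assoc, ← Nat.cast_add, mul_comm, Nat.div_add_mod,
      ZMod.natCast_zmod_val]
    abel
  · rw [zero_add]

theorem Nat.div_add_mod_le_of_lt {m q a r : ℕ} (hm : m < q * a + r) (hr : r ≤ a - 1) :
    m / a + m % a ≤ q + a - 2 := by
  obtain rfl | ha := Nat.eq_zero_or_pos a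
  · omega
  have hdiv := Nat.div_add_mod m a
  have hmod := Nat.mod_lt m ha
  rcases lt_trichotomy (m / a) q with hlt | heq | hgt
  · omega
  · rw [heq, mul_comm] at hdiv
    omega
  · have := Nat.mul_le_mul_right a hgt
    rw [Nat.succ_mul, mul_comm (m / a)] at this
    omega

theorem circDiam_le_of_circDist_le {n : ℕ} {a : ℤ} {d : ℕ}
    (h : ∀ u v : ZMod n, circDist n a u v ≤ d) : circDiam n a ≤ d := by
  refine csSup_le ⟨_, 0, rfl⟩ ?_
  rintro _ ⟨u, rfl⟩
  refine csSup_le ⟨_, u, rfl⟩ ?_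
  rintro _ ⟨v, rfl⟩
  exact h u v

theorem stmt8 (n a q r : ℕ) (hn : n = q * a + r) (ha : 4 ≤ a) (hq : 2 ≤ q)
    (hr : r ≤ a - 1) :
    circDiam n (a : ℤ) ≤ q + a - 2 := by
  have : NeZero n := ⟨by subst hn; positivity⟩
  refine circDiam_le_of_circDist_le fun u v => ?_
  exact (circDist_le_div_add_mod a u v).trans
    (Nat.div_add_mod_le_of_lt (hn ▸ ZMod.val_lt (v - u)) hr)
end

section
/- Let n = k(a-1) + s with a ≥ 4 and 0 ≤ s ≤ min{a,k} - 2. Then the broadcast independence number of C⃗(n;1,a) is at least k(a-2) when s = 0, at least (k-1)(a-2)+1 when s = 1, and at least (k-s)(a-2)+(s-1)(s+1) when s ≥ 2. -/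
/-!
A walk of length `L` that uses `m` arcs of type `+a` advances by `L + m (a - 1)`, so it leads from
`u` to `v` only if `L + m (a - 1) = (v - u).val + t n` for some `t ≥ 0`. With `n = k (a - 1) + s`
this bounds the distances between the vertices `q (a - 1)`: a forward jump of `C (a - 1)` costs
at least `a - 1` steps, and a backward jump, i.e. a forward one of `(k - j)(a - 1) + s`, costs at
least `s` steps, and at least `a - 1 + s` when `k - j > s`. Hence the following broadcasts on the
vertices `q (a - 1)` are independent and have the required cost: for `s = 0`, value `a - 2` for
`q < k`; for `s = 1`, value `a - 2` for `q < k - 2` and `a - 1` for `q = k - 2`; for `s ≥ 2`,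
value `a - 2` for `q < k - s` and `s - 1` for `k - s ≤ q ≤ k`. For `k = 1, s = 0` the graph is a
directed cycle of length `a - 1`, and one vertex of eccentricity `a - 2` does it.
-/

open Finset

theorem Finset.sum_range_ite_lt {M : Type*} [AddCommMonoid M] {p N : ℕ} (hp : p ≤ N) (x y : M) :
    ∑ q ∈ range N, (if q < p then x else y) = p • x + (N - p) • y := by
  rw [← sum_range_add_sum_Ico _ hp,
    sum_congr rfl fun q hq => if_pos (mem_range.1 hq),
    sum_congr rfl fun q hq => if_neg (not_lt.2 (mem_Ico.1 hq).1),
    sum_const, sum_const, card_range, Nat.card_Ico]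

namespace Circulant

variable {n : ℕ} {b : ℤ}

theorem circSteps_iff {u v : ZMod n} {L : ℕ} :
    circSteps n b u v L ↔ ∃ m ≤ L, v = u + L + m * ((b : ZMod n) - 1) := by
  constructor
  · rintro ⟨g, rfl, rfl, harc⟩
    induction L with
    | zero => exact ⟨0, le_rfl, by simp⟩
    | succ L ih =>
      obtain ⟨m, hm, hg⟩ := ih fun i hi => harc i (Nat.lt_succ_of_lt hi)
      rcases harc L (Nat.lt_succ_self L) with h | h
      · exact ⟨m, hm.trans L.le_succ, by rw [h, hg]; push_cast; ring⟩
      · exact ⟨m + 1, Nat.succ_le_succ hm, by rw [h, hg]; push_cast; ring⟩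
  · rintro ⟨m, hm, rfl⟩
    refine ⟨fun i => u + i + (min i m : ℕ) * ((b : ZMod n) - 1), by simp,
      by simp [min_eq_right hm], fun i _ => ?_⟩
    rcases lt_or_ge i m with him | him
    · right
      simp only [min_eq_left him.le, min_eq_left (Nat.succ_le_of_lt him)]
      push_cast; ring
    · left
      simp only [min_eq_right him, min_eq_right (him.trans i.le_succ)]
      push_cast; ring

theorem circSteps_val_sub [NeZero n] (u v : ZMod n) : circSteps n b u v (v - u).val :=
  circSteps_iff.2 ⟨0, Nat.zero_le _, by simp⟩

theorem circDist_lt [NeZero n] (u v : ZMod n) : circDist n b u v < n :=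
  (Nat.sInf_le (circSteps_val_sub u v)).trans_lt (ZMod.val_lt _)

theorem circDist_le_circEcc [NeZero n] (u v : ZMod n) : circDist n b u v ≤ circEcc n b u :=
  le_csSup ⟨n, by rintro _ ⟨w, rfl⟩; exact (circDist_lt u w).le⟩ ⟨v, rfl⟩

theorem circEcc_le [NeZero n] (u : ZMod n) : circEcc n b u ≤ n :=
  csSup_le ⟨_, u, rfl⟩ fun _ ⟨w, hw⟩ => hw ▸ (circDist_lt u w).le

theorem circCost_le_betaB [NeZero n] {f : ZMod n → ℕ} (hf : IsIndepBroadcast n b f) :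
    circCost n f ≤ betaB n b := by
  refine le_csSup ⟨n * n, ?_⟩ ⟨f, hf, rfl⟩
  rintro _ ⟨g, hg, rfl⟩
  calc circCost n g ≤ ∑ _i ∈ range n, n :=
        sum_le_sum fun i _ => (hg.1 _).trans (circEcc_le _)
    _ = n * n := by simp

theorem circEcc_le_betaB [NeZero n] (u : ZMod n) : circEcc n b u ≤ betaB n b := by
  let f : ZMod n → ℕ := fun v => if v = u then circEcc n b u else 0
  have hf : IsIndepBroadcast n b f := by
    refine ⟨fun v => ?_, fun v w hvw hv hw => ?_⟩
    · by_cases hvu : v = u <;> simp [f, hvu]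
    · by_cases hvu : v = u <;> by_cases hwu : w = u <;> simp_all [f]
  calc circEcc n b u = f (u.val : ZMod n) := by simp [f]
    _ ≤ circCost n f := single_le_sum (f := fun i : ℕ => f i) (fun _ _ => Nat.zero_le _)
          (mem_range.2 u.val_lt)
    _ ≤ betaB n b := circCost_le_betaB hf

theorem le_or_le_of_add_mul_eq {L m b N c : ℕ} (hm : m ≤ L) (h : L + m * b = N * b + c) :
    b + c ≤ L ∨ N ≤ L ∧ L ≤ c := by
  rcases lt_or_ge m N with hmN | hNm
  · have := Nat.mul_le_mul_right b hmN
    left; linarith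
  · have := Nat.mul_le_mul_right b hNm
    right; constructor <;> linarith

theorem le_of_add_mul_eq {L m b N c : ℕ} (hc : c < b) (h : L + m * b = N * b + c) : c ≤ L := by
  have := congrArg (· % b) h
  simp only [Nat.add_mul_mod_self_right, add_comm (N * b), Nat.mod_eq_of_lt hc] at this
  exact this ▸ Nat.mod_le L b

theorem le_circDist [NeZero n] {a B : ℕ} (ha : 1 ≤ a) (u v : ZMod n)
    (h : ∀ L m t, m ≤ L → L + m * (a - 1) = (v - u).val + t * n → B ≤ L) :
    B ≤ circDist n a u v := by
  refine le_csInf ⟨_, circSteps_val_sub u v⟩ fun L hL => ?_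
  obtain ⟨m, hm, rfl⟩ := circSteps_iff.1 hL
  have hsub : u + L + m * ((a : ℤ) - 1 : ZMod n) - u = ((L + m * (a - 1) : ℕ) : ZMod n) := by
    push_cast [Nat.cast_sub ha]; ring
  refine h L m ((L + m * (a - 1)) / n) hm ?_
  rw [hsub, ZMod.val_natCast, Nat.mod_add_div']

theorem val_sub_natCast {x y δ : ℕ} (h : x + δ ≡ y [MOD n]) (hδ : δ < n) :
    ((y : ZMod n) - x).val = δ := by
  rw [← (ZMod.natCast_eq_natCast_iff _ _ _).2 h, Nat.cast_add, add_sub_cancel_left,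
    ZMod.val_natCast_of_lt hδ]

variable {a k s : ℕ}

theorem sub_one_add_le_circDist [NeZero n] (hn : n = k * (a - 1) + s) (hsk : s ≤ k)
    (ha : 1 ≤ a) {u v : ZMod n} {C r : ℕ} (huv : (v - u).val = C * (a - 1) + r) (hrC : r < C) :
    a - 1 + r ≤ circDist n a u v := by
  refine le_circDist ha u v fun L m t hm h => ?_
  rw [huv, hn] at h
  rcases le_or_le_of_add_mul_eq (N := C + t * k) (c := r + t * s) hm (by rw [h]; ring)
    with h | ⟨hN, hc⟩
  · omega
  · have := Nat.mul_le_mul_left t hsk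
    omega

theorem le_circDist_of_lt [NeZero n] (hn : n = k * (a - 1) + s) (ha : 1 ≤ a)
    {u v : ZMod n} {C r : ℕ} (huv : (v - u).val = C * (a - 1) + r) (hrk : r ≤ k)
    (hra : r < a - 1) :
    r ≤ circDist n a u v := by
  refine le_circDist ha u v fun L m t hm h => ?_
  rw [huv, hn] at h
  rcases Nat.eq_zero_or_pos t with rfl | ht
  · exact le_of_add_mul_eq (m := m) (N := C) hra (by rw [h]; ring)
  rcases le_or_le_of_add_mul_eq (N := C + t * k) (c := r + t * s) hm (by rw [h]; ring)
    with h | ⟨hN, hc⟩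
  · omega
  · have := Nat.le_mul_of_pos_left k ht
    omega

theorem sub_one_le_circEcc [NeZero n] (hn : n = k * (a - 1) + s) (hsk : s ≤ k) (hk : 2 ≤ k)
    (ha : 2 ≤ a) (u : ZMod n) : a - 1 ≤ circEcc n a u := by
  have hlt : a - 1 < n := by
    have := Nat.mul_le_mul_right (a - 1) hk
    omega
  have huv : (u + ((a - 1 : ℕ) : ZMod n) - u).val = 1 * (a - 1) + 0 := by
    rw [add_sub_cancel_left, ZMod.val_natCast_of_lt hlt, one_mul, add_zero]
  exact (sub_one_add_le_circDist hn hsk (by omega) huv one_pos).trans (circDist_le_circEcc _ _)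

theorem sub_two_le_circEcc (hn : n = a - 1) (ha : 2 ≤ a) (u : ZMod n) :
    a - 2 ≤ circEcc n a u := by
  have : NeZero n := ⟨by omega⟩
  have huv : (u + ((a - 2 : ℕ) : ZMod n) - u).val = a - 2 := by
    rw [add_sub_cancel_left, ZMod.val_natCast_of_lt (by omega)]
  refine (le_circDist (by omega) u (u + ((a - 2 : ℕ) : ZMod n)) fun L m t _ h => ?_).trans
    (circDist_le_circEcc u _)
  rw [huv, hn] at h
  exact le_of_add_mul_eq (m := m) (b := a - 1) (N := t) (by omega) (by rw [h]; ring)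

def stepBroadcast (n a Q : ℕ) (W : ℕ → ℕ) (x : ZMod n) : ℕ :=
  if (a - 1) ∣ x.val ∧ x.val / (a - 1) ≤ Q then W (x.val / (a - 1)) else 0

variable {Q : ℕ} {W : ℕ → ℕ}

theorem exists_eq_of_stepBroadcast_pos [NeZero n] {x : ZMod n}
    (hx : 0 < stepBroadcast n a Q W x) :
    ∃ q ≤ Q, x = ((q * (a - 1) : ℕ) : ZMod n) ∧ stepBroadcast n a Q W x = W q := by
  unfold stepBroadcast at hx ⊢
  split_ifs at hx ⊢ with h
  · exact ⟨_, h.2, by rw [Nat.div_mul_cancel h.1, ZMod.natCast_zmod_val], rfl⟩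
  · exact absurd hx (lt_irrefl 0)

theorem stepBroadcast_natCast_mul (ha : 2 ≤ a) (hQ : Q * (a - 1) < n) {q : ℕ} (hq : q ≤ Q) :
    stepBroadcast n a Q W ((q * (a - 1) : ℕ) : ZMod n) = W q := by
  have hlt : q * (a - 1) < n := (Nat.mul_le_mul_right _ hq).trans_lt hQ
  rw [stepBroadcast, ZMod.val_natCast_of_lt hlt, Nat.mul_div_cancel _ (by omega),
    if_pos ⟨Dvd.intro_left q rfl, hq⟩]

theorem sum_le_circCost_stepBroadcast (ha : 2 ≤ a) (hQ : Q * (a - 1) < n) :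
    ∑ q ∈ range (Q + 1), W q ≤ circCost n (stepBroadcast n a Q W) := by
  have hinj : Set.InjOn (· * (a - 1)) (range (Q + 1) : Set ℕ) :=
    fun x _ y _ hxy => Nat.eq_of_mul_eq_mul_right (by omega) hxy
  have hsub : (range (Q + 1)).image (· * (a - 1)) ⊆ range n := by
    intro x hx
    obtain ⟨q, hq, rfl⟩ := mem_image.1 hx
    exact mem_range.2 ((Nat.mul_le_mul_right _ (mem_range_succ_iff.1 hq)).trans_lt hQ)
  calc ∑ q ∈ range (Q + 1), W q
      = ∑ q ∈ range (Q + 1), stepBroadcast n a Q W ((q * (a - 1) : ℕ) : ZMod n) :=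
        sum_congr rfl fun q hq =>
          (stepBroadcast_natCast_mul ha hQ (mem_range_succ_iff.1 hq)).symm
    _ = ∑ i ∈ (range (Q + 1)).image (· * (a - 1)), stepBroadcast n a Q W (i : ZMod n) :=
        (sum_image (f := fun i : ℕ => stepBroadcast n a Q W i) hinj).symm
    _ ≤ circCost n (stepBroadcast n a Q W) := sum_le_sum_of_subset hsub

theorem isIndepBroadcast_stepBroadcast [NeZero n] (hn : n = k * (a - 1) + s) (hsa : s < a - 1)
    (hsk : s ≤ k) (hk : 2 ≤ k) (hQ : Q * (a - 1) < n)
    (hW : ∀ q ≤ Q, W q ≤ a - 1) (hfwd : ∀ q < Q, W q < a - 1)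
    (hbwd : ∀ q ≤ Q, W q < s ∨ q + s < k ∧ W q < a - 1 + s) :
    IsIndepBroadcast n a (stepBroadcast n a Q W) := by
  have ha : 2 ≤ a := by omega
  refine ⟨fun v => ?_, fun u v huv hu hv => ?_⟩
  · rcases Nat.eq_zero_or_pos (stepBroadcast n a Q W v) with h | h
    · exact h ▸ Nat.zero_le _
    obtain ⟨q, hq, -, hv⟩ := exists_eq_of_stepBroadcast_pos h
    exact hv ▸ (hW q hq).trans (sub_one_le_circEcc hn hsk hk ha v)
  obtain ⟨q₁, hq₁, rfl, hu⟩ := exists_eq_of_stepBroadcast_pos hu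
  obtain ⟨q₂, hq₂, rfl, -⟩ := exists_eq_of_stepBroadcast_pos hv
  rw [hu]
  rcases lt_trichotomy q₁ q₂ with h | rfl | h
  · obtain ⟨j, rfl⟩ := Nat.exists_eq_add_of_lt h
    have hδ : (j + 1) * (a - 1) < n :=
      (Nat.mul_le_mul_right _ (by omega)).trans_lt hQ
    have huv := val_sub_natCast (x := q₁ * (a - 1)) (y := (q₁ + j + 1) * (a - 1))
      (congrArg (· % n) (by ring)) hδ
    exact (hfwd q₁ (by omega)).trans_le
      (by simpa using sub_one_add_le_circDist (r := 0) hn hsk (by omega) huv j.succ_pos)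
  · exact absurd rfl huv
  · have hQk : Q ≤ k := by
      by_contra! hkQ
      have := Nat.mul_le_mul_right (a - 1) hkQ
      nlinarith
    obtain ⟨j, rfl⟩ := Nat.exists_eq_add_of_le h.le
    obtain ⟨c, rfl⟩ := Nat.exists_eq_add_of_le (show j ≤ k by omega)
    have hδ : c * (a - 1) + s < n := by
      have := Nat.mul_le_mul_right (a - 1) (show 1 ≤ j by omega)
      rw [hn]; nlinarith
    have huv := val_sub_natCast (x := (q₂ + j) * (a - 1)) (y := q₂ * (a - 1))
      ((congrArg (· % n) (by rw [hn]; ring)).trans (Nat.add_mod_right _ n)) hδ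
    rcases hbwd _ hq₁ with hWs | ⟨hks, hWs⟩
    · exact hWs.trans_le (le_circDist_of_lt hn (by omega) huv hsk hsa)
    · exact hWs.trans_le (sub_one_add_le_circDist hn hsk (by omega) huv (by omega))

theorem sum_le_betaB (hn : n = k * (a - 1) + s) (hsa : s < a - 1)
    (hsk : s ≤ k) (hk : 2 ≤ k) (hQ : Q * (a - 1) < n)
    (hW : ∀ q ≤ Q, W q ≤ a - 1) (hfwd : ∀ q < Q, W q < a - 1)
    (hbwd : ∀ q ≤ Q, W q < s ∨ q + s < k ∧ W q < a - 1 + s) :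
    ∑ q ∈ range (Q + 1), W q ≤ betaB n a := by
  have : NeZero n := ⟨by omega⟩
  exact (sum_le_circCost_stepBroadcast (by omega) hQ).trans
    (circCost_le_betaB (isIndepBroadcast_stepBroadcast hn hsa hsk hk hQ hW hfwd hbwd))

end Circulant

open Circulant in
theorem stmt13 (n a k s : ℕ) (hn : n = k * (a - 1) + s) (ha : 4 ≤ a)
    (hs : s ≤ min a k - 2) :
    (s = 0 → k * (a - 2) ≤ betaB n (a : ℤ)) ∧
    (s = 1 → (k - 1) * (a - 2) + 1 ≤ betaB n (a : ℤ)) ∧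
    (2 ≤ s → (k - s) * (a - 2) + (s - 1) * (s + 1) ≤ betaB n (a : ℤ)) := by
  have hsa : s < a - 1 := by omega
  have hsk : s ≤ k := by omega
  refine ⟨fun hs0 => ?_, fun hs1 => ?_, fun hs2 => ?_⟩
  · subst hs0
    rcases lt_or_ge k 2 with hk | hk
    · interval_cases k
      · simp
      · have : NeZero n := ⟨by omega⟩
        simpa using (sub_two_le_circEcc (by omega) (by omega) 0).trans (circEcc_le_betaB 0)
    have hQ : (k - 1) * (a - 1) < n := hn ▸ (Nat.mul_lt_mul_right (by omega)).2 (by omega)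
    have := sum_le_betaB (W := fun _ => a - 2) hn hsa hsk hk hQ
      (fun _ _ => by omega) (fun _ _ => by omega) (fun _ _ => by omega)
    rwa [sum_const, card_range, smul_eq_mul, Nat.sub_add_cancel (by omega)] at this
  · subst hs1
    have hQ : (k - 2) * (a - 1) < n := hn ▸ Nat.lt_succ_of_le (Nat.mul_le_mul_right _ (by omega))
    have := sum_le_betaB (W := fun q => if q < k - 2 then a - 2 else a - 1) hn hsa hsk
      (by omega) hQ (fun _ _ => by split_ifs <;> omega) (fun _ h => by rw [if_pos h]; omega)
      (fun _ _ => by split_ifs <;> omega)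
    rw [sum_range_ite_lt (by omega), smul_eq_mul, smul_eq_mul, add_tsub_cancel_left,
      one_mul] at this
    rw [show k - 1 = k - 2 + 1 by omega, add_mul, one_mul]
    omega
  · have hQ : k * (a - 1) < n := by omega
    have := sum_le_betaB (W := fun q => if q < k - s then a - 2 else s - 1) hn hsa hsk
      (by omega) hQ (fun _ _ => by split_ifs <;> omega) (fun _ _ => by split_ifs <;> omega)
      (fun _ _ => by split_ifs <;> omega)
    rwa [sum_range_ite_lt (by omega), smul_eq_mul, smul_eq_mul,
      show k + 1 - (k - s) = s + 1 by omega, Nat.mul_comm (s + 1)] at this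
end

section
/- Let n = qa + r with r ∈ {0, a-1} and 3 ≤ q < a-1, and let f be an independent broadcast on C⃗(n;1,a) with f(v) ≤ q for all v. Let V¹ = {v : f(v) = q}, V² = {v : 1 ≤ f(v) ≤ q-1}, and V⁺ = V¹ ∪ V². Then Σ_v f(v) ≤ n - |V²| - q|V¹| when r = 0, and Σ_v f(v) ≤ n - |V⁺| - q|V¹| when r = a-1. -/
/-!
Charge each broadcasting vertex `v` with the vertices `v, v + 1, …, v + f v` and, when `f v = q`,
also with the `X` tips `v + q + x (a - 1)`, `1 ≤ x ≤ X`, where `X = q - 1` if `r = 0` and `X = q`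
if `r = a - 1`; in both cases `n = (X + 1) (a - 1) + q`. If two broadcasting vertices charged a
common vertex, the difference of their offsets would, after going at most once around the cycle,
be the displacement `x a + y` of a walk of length `x + y` bounded by the value of one of them,
contradicting independence. So the charged sets are disjoint and `∑ f + |V⁺| + X |V¹| ≤ n`.
-/

open Finset

theorem sum_range_zmod (n : ℕ) [NeZero n] (g : ZMod n → ℕ) :
    ∑ i ∈ range n, g i = ∑ v : ZMod n, g v :=
  sum_nbij' (↑) ZMod.val (fun _ _ => mem_univ _) (fun v _ => mem_range.2 v.val_lt)
    (fun _ hi => ZMod.val_cast_of_lt (mem_range.1 hi)) (fun v _ => ZMod.natCast_zmod_val v)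
    (fun _ _ => rfl)

theorem card_range_filter_zmod (n : ℕ) [NeZero n] (p : ZMod n → Prop) [DecidablePred p] :
    #((range n).filter fun i : ℕ => p i) = #{v | p v} := by
  simp only [card_filter]
  exact sum_range_zmod n fun v => if p v then 1 else 0

theorem circDist_add_mul_add_le {n : ℕ} (a : ℤ) (u : ZMod n) (x y : ℕ) :
    circDist n a u (u + x * a + y) ≤ x + y := by
  apply Nat.sInf_le
  refine ⟨fun i => u + (min i x : ℕ) * a + (i - x : ℕ), by simp, ?_, fun i _ => ?_⟩
  · simp only [min_eq_right (Nat.le_add_right x y), Nat.add_sub_cancel_left]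
  · rcases lt_or_ge i x with hi | hi
    · right
      simp only [min_eq_left hi.le, min_eq_left (Nat.succ_le_of_lt hi),
        Nat.sub_eq_zero_of_le hi.le, Nat.sub_eq_zero_of_le (Nat.succ_le_of_lt hi)]
      push_cast
      ring
    · left
      simp only [min_eq_right hi, min_eq_right (Nat.le_succ_of_le hi), Nat.succ_sub hi]
      push_cast
      ring

/-- Modulo `n`, `d` is the displacement `x * a + y` of a walk with at most `m` arcs. -/
def ReachableOffset (n : ℕ) (a m d : ℤ) : Prop :=
  ∃ x y : ℤ, 0 ≤ x ∧ 0 ≤ y ∧ x + y ≤ m ∧ d ≡ x * a + y [ZMOD n]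

theorem IsIndepBroadcast.not_reachableOffset {n : ℕ} {a : ℤ} {f : ZMod n → ℕ}
    (hf : IsIndepBroadcast n a f) {u v : ZMod n} (huv : u ≠ v) (hu : 0 < f u) (hv : 0 < f v)
    {d : ℤ} (hd : (d : ZMod n) = v - u) : ¬ ReachableOffset n a (f u) d := by
  rintro ⟨x, y, hx, hy, hxy, hdxy⟩
  lift x to ℕ using hx
  lift y to ℕ using hy
  have hv_eq : v = u + x * a + y := by
    rw [(ZMod.intCast_eq_intCast_iff _ _ n).2 hdxy] at hd
    push_cast at hd
    linear_combination -hd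
  have hdist := circDist_add_mul_add_le a u x y
  rw [← hv_eq] at hdist
  have := hf.2 u v huv hu hv
  omega

def chargedOffsets (q b X m : ℕ) : Finset ℕ :=
  if m = q then range (q + 1) ∪ (Icc 1 X).image (fun x => q + x * b) else range (m + 1)

section Offsets

variable {n b q X m : ℕ}

theorem mem_chargedOffsets {t : ℕ} :
    t ∈ chargedOffsets q b X m ↔ t ≤ m ∨ m = q ∧ ∃ x ∈ Icc 1 X, q + x * b = t := by
  unfold chargedOffsets
  split_ifs with hm
  · subst hm
    simp
  · simp [hm]

theorem card_chargedOffsets (hb : 0 < b) :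
    #(chargedOffsets q b X m) = m + 1 + if m = q then X else 0 := by
  unfold chargedOffsets
  split_ifs with hm
  · subst hm
    rw [card_union_of_disjoint, card_range, card_image_of_injective, Nat.card_Icc,
      Nat.add_sub_cancel]
    · intro x x' h
      exact Nat.eq_of_mul_eq_mul_right hb (Nat.add_left_cancel h)
    · simp only [disjoint_left, mem_range, mem_image, mem_Icc, not_exists, not_and]
      intro t ht x hx rfl
      nlinarith
  · simp

theorem lt_of_mem_chargedOffsets (hn : n = (X + 1) * b + q) (hb : 0 < b) (hm : m ≤ q) {t : ℕ}
    (ht : t ∈ chargedOffsets q b X m) : t < n := by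
  rcases mem_chargedOffsets.1 ht with ht | ⟨-, x, hx, rfl⟩
  · nlinarith
  · nlinarith [(mem_Icc.1 hx).2]

theorem reachableOffset_sub_of_le (a : ℤ) {s s' : ℕ} (h : s' ≤ s) (hs : s - s' ≤ m) :
    ReachableOffset n a m ((s : ℤ) - s') :=
  ⟨0, s - s', le_rfl, by omega, by omega, by simp⟩

theorem reachableOffset_tip_sub_base (hn : n = (X + 1) * b + q) (hXq : X ≤ q) {s x : ℕ}
    (hx : x ≤ X) (hs : s ≤ m) :
    ReachableOffset n (b + 1) q (((q + x * b : ℕ) : ℤ) - s) ∨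
      ReachableOffset n (b + 1) m ((s : ℤ) - (q + x * b : ℕ)) := by
  rcases le_or_gt (s + x) q with h | h
  · refine .inl ⟨x, (q : ℤ) - s - x, by positivity, by omega, by omega, ?_⟩
    rw [Int.modEq_iff_dvd]
    exact ⟨0, by push_cast; ring⟩
  · refine .inr ⟨(X : ℤ) + 1 - x, (s : ℤ) + x - (X + 1), by omega, by omega, by omega, ?_⟩
    rw [Int.modEq_iff_dvd]
    exact ⟨1, by push_cast [hn]; ring⟩

theorem reachableOffset_tip_sub_tip (hn : n = (X + 1) * b + q) (hXq : X ≤ q) {x x' : ℕ}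
    (hlt : x < x') (hx' : x' ≤ X) :
    ReachableOffset n (b + 1) q (((q + x * b : ℕ) : ℤ) - (q + x' * b : ℕ)) := by
  refine ⟨(X : ℤ) + 1 - (x' - x), (q : ℤ) - (X + 1) + (x' - x),
    by omega, by omega, by omega, ?_⟩
  rw [Int.modEq_iff_dvd]
  exact ⟨1, by push_cast [hn]; ring⟩

theorem reachableOffset_or_of_mem_chargedOffsets (hn : n = (X + 1) * b + q) (hXq : X ≤ q)
    {m' t t' : ℕ} (ht : t ∈ chargedOffsets q b X m) (ht' : t' ∈ chargedOffsets q b X m') :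
    ReachableOffset n (b + 1) m ((t : ℤ) - t') ∨
      ReachableOffset n (b + 1) m' ((t' : ℤ) - t) := by
  rcases mem_chargedOffsets.1 ht with hs | ⟨rfl, x, hx, rfl⟩ <;>
    rcases mem_chargedOffsets.1 ht' with hs' | ⟨rfl, x', hx', rfl⟩
  · rcases le_total t' t with h | h
    · exact .inl (reachableOffset_sub_of_le _ h (by omega))
    · exact .inr (reachableOffset_sub_of_le _ h (by omega))
  · exact (reachableOffset_tip_sub_base hn hXq (mem_Icc.1 hx').2 hs).symm
  · exact reachableOffset_tip_sub_base hn hXq (mem_Icc.1 hx).2 hs'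
  · rcases lt_trichotomy x x' with h | rfl | h
    · exact .inl (reachableOffset_tip_sub_tip hn hXq h (mem_Icc.1 hx').2)
    · exact .inl (reachableOffset_sub_of_le _ le_rfl (by omega))
    · exact .inr (reachableOffset_tip_sub_tip hn hXq h (mem_Icc.1 hx).2)

end Offsets

section Packing

variable {n b q X : ℕ} {f : ZMod n → ℕ}

def chargedSet (q b X : ℕ) (f : ZMod n → ℕ) (v : ZMod n) : Finset (ZMod n) :=
  (chargedOffsets q b X (f v)).image fun t : ℕ => v + (t : ZMod n)

theorem IsIndepBroadcast.disjoint_chargedSet (hf : IsIndepBroadcast n ((b : ℤ) + 1) f)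
    (hn : n = (X + 1) * b + q) (hXq : X ≤ q) {u v : ZMod n} (huv : u ≠ v) (hu : 0 < f u)
    (hv : 0 < f v) :
    Disjoint (chargedSet q b X f u) (chargedSet q b X f v) := by
  simp only [chargedSet, disjoint_left, mem_image, not_exists, not_and]
  rintro _ ⟨t, ht, rfl⟩ t' ht' htt'
  rcases reachableOffset_or_of_mem_chargedOffsets hn hXq ht ht' with h | h
  · exact hf.not_reachableOffset huv hu hv (by push_cast; linear_combination -htt') h
  · exact hf.not_reachableOffset huv.symm hv hu (by push_cast; linear_combination htt') h

theorem IsIndepBroadcast.sum_add_card_add_mul_card_le [NeZero n]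
    (hf : IsIndepBroadcast n ((b : ℤ) + 1) f) (hb : 0 < b) (hn : n = (X + 1) * b + q)
    (hXq : X ≤ q) (hbd : ∀ v, f v ≤ q) :
    ∑ v, f v + #{v | 0 < f v} + X * #{v | f v = q} ≤ n := by
  set P : Finset (ZMod n) := {v | 0 < f v}
  have hS : ∀ v, #(chargedSet q b X f v) = f v + 1 + if f v = q then X else 0 := by
    intro v
    rw [chargedSet, card_image_of_injOn, card_chargedOffsets hb]
    intro t ht t' ht' htt'
    have := add_left_cancel htt'
    rwa [ZMod.natCast_eq_natCast_iff',
      Nat.mod_eq_of_lt (lt_of_mem_chargedOffsets hn hb (hbd v) ht),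
      Nat.mod_eq_of_lt (lt_of_mem_chargedOffsets hn hb (hbd v) ht')] at this
  have htips : ∑ v ∈ P, (if f v = q then X else 0) = X * #{v | f v = q} := by
    rcases Nat.eq_zero_or_pos q with rfl | hq
    · simp [Nat.le_zero.1 hXq]
    · rw [← sum_filter, sum_const, smul_eq_mul, mul_comm, filter_filter]
      congr 2
      ext v
      simp only [mem_filter, mem_univ, true_and, and_iff_right_iff_imp]
      omega
  calc ∑ v, f v + #P + X * #{v | f v = q}
      = ∑ v ∈ P, (f v + 1 + if f v = q then X else 0) := by
        rw [sum_add_distrib, sum_add_distrib, htips, card_eq_sum_ones,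
          sum_filter_of_ne fun v _ hv => Nat.pos_of_ne_zero hv]
    _ = #(P.biUnion (chargedSet q b X f)) := by
        rw [card_biUnion fun u hu v hv huv => hf.disjoint_chargedSet hn hXq huv
          (mem_filter.1 hu).2 (mem_filter.1 hv).2]
        simp only [hS, P]
    _ ≤ n := (card_le_univ _).trans (ZMod.card n).le

end Packing

theorem stmt14_general (n a q r : ℕ) (hn : n = q * a + r)
    (hqa : q < a - 1)
    (f : ZMod n → ℕ) (hf : IsIndepBroadcast n (a : ℤ) f)
    (hbd : ∀ v, f v ≤ q) :
    (r = 0 →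
      (circCost n f : ℤ) ≤
        (n : ℤ) -
          ((Finset.range n).filter (fun i : ℕ => 1 ≤ f (i : ZMod n) ∧ f (i : ZMod n) ≤ q - 1)).card -
          (q : ℤ) * ((Finset.range n).filter (fun i : ℕ => f (i : ZMod n) = q)).card) ∧
    (r = a - 1 →
      (circCost n f : ℤ) ≤
        (n : ℤ) -
          ((Finset.range n).filter (fun i : ℕ => 0 < f (i : ZMod n))).card -
          (q : ℤ) * ((Finset.range n).filter (fun i : ℕ => f (i : ZMod n) = q)).card) := by
  rcases Nat.eq_zero_or_pos n with rfl | hn0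
  · simp [circCost]
  have : NeZero n := ⟨hn0.ne'⟩
  obtain ⟨b, rfl⟩ : ∃ b, a = b + 1 := ⟨a - 1, by omega⟩
  push_cast at hf
  rw [circCost, sum_range_zmod, card_range_filter_zmod n fun v => f v = q]
  constructor
  · rintro rfl
    obtain ⟨p, rfl⟩ : ∃ p, q = p + 1 := Nat.exists_eq_add_one_of_ne_zero (by rintro rfl; simp_all)
    have hpack :=
      hf.sum_add_card_add_mul_card_le (X := p) (by omega) (by rw [hn]; ring) (by omega) hbd
    have hsplit : #{v | 0 < f v} = #{v | 1 ≤ f v ∧ f v ≤ p} + #{v | f v = p + 1} := by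
      simp only [card_filter, ← sum_add_distrib]
      refine sum_congr rfl fun v _ => ?_
      have := hbd v
      split_ifs <;> omega
    rw [card_range_filter_zmod n fun v => 1 ≤ f v ∧ f v ≤ p + 1 - 1, Nat.add_sub_cancel]
    rw [hsplit] at hpack
    push_cast [← Nat.cast_le (α := ℤ)] at hpack ⊢
    linarith
  · rintro rfl
    have hpack := hf.sum_add_card_add_mul_card_le (X := q) (by omega) (by rw [hn]; ring) le_rfl hbd
    rw [card_range_filter_zmod n fun v => 0 < f v]
    push_cast [← Nat.cast_le (α := ℤ)] at hpack ⊢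
    linarith

theorem stmt14 (n a q r : ℕ) (hn : n = q * a + r) (hr : r = 0 ∨ r = a - 1)
    (hq : 3 ≤ q) (hqa : q < a - 1)
    (f : ZMod n → ℕ) (hf : IsIndepBroadcast n (a : ℤ) f)
    (hbd : ∀ v, f v ≤ q) :
    (r = 0 →
      (circCost n f : ℤ) ≤
        (n : ℤ) -
          ((Finset.range n).filter (fun i : ℕ => 1 ≤ f (i : ZMod n) ∧ f (i : ZMod n) ≤ q - 1)).card -
          (q : ℤ) * ((Finset.range n).filter (fun i : ℕ => f (i : ZMod n) = q)).card) ∧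
    (r = a - 1 →
      (circCost n f : ℤ) ≤
        (n : ℤ) -
          ((Finset.range n).filter (fun i : ℕ => 0 < f (i : ZMod n))).card -
          (q : ℤ) * ((Finset.range n).filter (fun i : ℕ => f (i : ZMod n) = q)).card) :=
  stmt14_general n a q r hn hqa f hf hbd
end

section
/- Let n = qa + r with r ∈ {0, a-1} and 3 ≤ q < a-1, and let f be an independent broadcast on C⃗(n;1,a) with f(v) ≤ q for all v. Let V¹ = {v : f(v) = q}. Then Σ_v f(v) ≤ ⌊((q-1)/q)·n⌋ - (q-2)|V¹| when r = 0, and Σ_v f(v) ≤ ⌊((q-1)/q)·(n - |V¹|)⌋ - (q-2)|V¹| when r = a-1. -/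
/-!
A broadcasting vertex `x` of value `k` forbids every other broadcasting vertex of the form
`x + t + s a` with `t + s ≤ k`. Along steps by `a`, each broadcasting vertex therefore owns an arc
that no other one enters, and counting arcs inside a cyclic subgroup bounds the cost.

For `r = 0` the vertices fall into `a` columns `x + ⟨a⟩` of `q` vertices each. A column carries
total value at most `q - 1`, unless it contains a vertex of value `q`, which is then alone in it and
silences the following column. Summing over columns gives `(q - 1) a - (q - 2) |V¹|`.

For `r = a - 1`, `(q + 1) a = n + 1`, so `a` generates `ℤ/n` and `x + (q + 1 + j) a = x + 1 + j a`.
Hence a vertex of value `q` owns an arc of `2q + 1` vertices and one of value `k < q` an arc of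
`k + 1`. All arcs fit in one cycle of length `n`, so `∑ (f + 1) + q |V¹| ≤ n` over the broadcasting
vertices, which rearranges to the bound.
-/

open Finset

lemma ZMod.sum_range_natCast {M : Type*} [AddCommMonoid M] {n : ℕ} [NeZero n] (g : ZMod n → M) :
    ∑ i ∈ range n, g i = ∑ v, g v :=
  sum_nbij' Nat.cast ZMod.val (by simp) (by simp [ZMod.val_lt])
    (fun i hi => ZMod.val_natCast_of_lt (mem_range.1 hi)) (fun v _ => ZMod.natCast_zmod_val v)
    (fun _ _ => rfl)

lemma ZMod.card_filter_range_natCast {n : ℕ} [NeZero n] (p : ZMod n → Prop) [DecidablePred p] :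
    #((range n).filter fun i : ℕ => p i) = #{v | p v} := by
  rw [card_filter, card_filter, ZMod.sum_range_natCast (fun v => if p v then 1 else 0)]

lemma le_ediv_sub_of_mul_le {q c N m : ℤ} (hq : 0 < q) (h : q * c ≤ N - q * m) :
    c ≤ N / q - m := by
  have := (Int.le_ediv_iff_mul_le hq).2 (show (c + m) * q ≤ N by linarith)
  linarith

lemma circSteps_add_mul (n : ℕ) (A : ℤ) (u : ZMod n) (t s : ℕ) :
    circSteps n A u (u + t + s * A) (t + s) := by
  refine ⟨fun i => u + (min i t : ℕ) + ((i - t : ℕ) : ZMod n) * A, by simp, by simp, ?_⟩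
  intro i _
  rcases lt_or_ge i t with h | h
  · left
    beta_reduce
    rw [min_eq_left h.le, min_eq_left h, Nat.sub_eq_zero_of_le h.le, Nat.sub_eq_zero_of_le h]
    push_cast; ring
  · right
    beta_reduce
    rw [min_eq_right h, min_eq_right (by omega), Nat.sub_add_comm h]
    push_cast; ring

lemma circDist_le_of_eq_add_mul {n : ℕ} {A : ℤ} {u v : ZMod n} {t s : ℕ}
    (h : v = u + t + s * A) : circDist n A u v ≤ t + s :=
  Nat.sInf_le (h ▸ circSteps_add_mul n A u t s)

lemma IsIndepBroadcast.lt_of_eq_add_mul {n : ℕ} {A : ℤ} {f : ZMod n → ℕ}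
    (hf : IsIndepBroadcast n A f) {x y : ZMod n} (hxy : x ≠ y) (hx : 0 < f x) (hy : 0 < f y)
    {t s : ℕ} (h : y = x + t + s * A) : f x < t + s :=
  (hf.2 x y hxy hx hy).trans_le (circDist_le_of_eq_add_mul h)

section Packing

variable {G : Type*} [AddCommGroup G] [DecidableEq G]

def arc (g x : G) (L : ℕ) : Finset G := (range L).image (fun d => x + d • g)

lemma card_arc {g : G} (x : G) {L : ℕ} (hL : L ≤ addOrderOf g) : #(arc g x L) = L := by
  rw [arc, card_image_of_injOn, card_range]
  intro d hd e he hde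
  exact nsmul_injOn_Iio_addOrderOf (lt_of_lt_of_le (mem_range.1 hd) hL)
    (lt_of_lt_of_le (mem_range.1 he) hL) (add_left_cancel hde)

lemma arc_subset_arc_addOrderOf {g x₀ : G} {k L : ℕ} (hL : L ≤ addOrderOf g) :
    arc g (x₀ + k • g) L ⊆ arc g x₀ (addOrderOf g) := by
  intro z hz
  obtain ⟨d, hd, rfl⟩ := mem_image.1 hz
  have hpos : 0 < addOrderOf g := Nat.zero_lt_of_lt ((mem_range.1 hd).trans_le hL)
  refine mem_image.2 ⟨(k + d) % addOrderOf g, mem_range.2 (Nat.mod_lt _ hpos), ?_⟩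
  rw [mod_addOrderOf_nsmul, add_nsmul, add_assoc]

lemma sum_le_addOrderOf_of_arcs {g x₀ : G} {T : Finset G} {L : G → ℕ}
    (hT : ∀ x ∈ T, ∃ k : ℕ, x = x₀ + k • g) (hL : ∀ x ∈ T, L x ≤ addOrderOf g)
    (hsep : ∀ x ∈ T, ∀ y ∈ T, x ≠ y → ∀ d < L x, y ≠ x + d • g) :
    ∑ x ∈ T, L x ≤ addOrderOf g := by
  have hdisj : (T : Set G).PairwiseDisjoint (fun x => arc g x (L x)) := by
    intro x hx y hy hxy
    refine disjoint_left.2 fun z hzx hzy => ?_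
    obtain ⟨d, hd, rfl⟩ := mem_image.1 hzx
    obtain ⟨e, he, hde⟩ := mem_image.1 hzy
    rw [mem_range] at hd he
    rcases le_total e d with hed | hde'
    · refine hsep x hx y hy hxy (d - e) (by omega) ?_
      rw [← add_right_cancel_iff (a := e • g), hde, add_assoc, ← add_nsmul, Nat.sub_add_cancel hed]
    · refine hsep y hy x hx (Ne.symm hxy) (e - d) (by omega) ?_
      rw [← add_right_cancel_iff (a := d • g), ← hde, add_assoc, ← add_nsmul,
        Nat.sub_add_cancel hde']
  calc ∑ x ∈ T, L x = ∑ x ∈ T, #(arc g x (L x)) :=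
        sum_congr rfl fun x hx => (card_arc x (hL x hx)).symm
    _ = #(T.biUnion fun x => arc g x (L x)) := (card_biUnion hdisj).symm
    _ ≤ #(arc g x₀ (addOrderOf g)) := card_le_card <| biUnion_subset.2 fun x hx => by
        obtain ⟨k, rfl⟩ := hT x hx
        exact arc_subset_arc_addOrderOf (hL _ hx)
    _ ≤ addOrderOf g := card_image_le.trans (card_range _).le

end Packing

section Divisible

variable {q a : ℕ}

/-- For `n = q * a`, vertex `i + k * a` (`i < a`, `k < q`) lies in column `i`: a step by `a` stays
in the column, a step by `1` moves to the next one. -/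
def column (q a : ℕ) : ZMod (q * a) →+* ZMod a := ZMod.castHom (dvd_mul_left a q) (ZMod a)

lemma addOrderOf_natCast_mul (ha : a ≠ 0) : addOrderOf (a : ZMod (q * a)) = q := by
  rw [ZMod.addOrderOf_coe' _ ha, Nat.gcd_mul_left_left, Nat.mul_div_cancel _ (Nat.pos_of_ne_zero ha)]

lemma exists_eq_add_mul_of_column_eq [NeZero (q * a)] {x y : ZMod (q * a)} {t : ℕ}
    (h : column q a y = column q a x + t) : ∃ k < q, y = x + t + k * a := by
  have hw : column q a (y - x - (t : ZMod (q * a))) = 0 := by simp [h]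
  rw [column, ZMod.castHom_apply, ZMod.cast_eq_val, ZMod.natCast_eq_zero_iff] at hw
  obtain ⟨k, hk⟩ := hw
  refine ⟨k, ?_, ?_⟩
  · have := ZMod.val_lt (y - x - (t : ZMod (q * a)))
    rw [hk, mul_comm q] at this
    exact Nat.lt_of_mul_lt_mul_left this
  · have := ZMod.natCast_zmod_val (y - x - (t : ZMod (q * a)))
    rw [hk] at this
    push_cast at this
    linear_combination -this

variable [NeZero (q * a)] {f : ZMod (q * a) → ℕ}

lemma IsIndepBroadcast.eq_of_column_eq (hf : IsIndepBroadcast (q * a) a f) {x y : ZMod (q * a)}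
    (hx : f x = q) (hy : 0 < f y)
    (h : column q a y = column q a x) : y = x := by
  by_contra hne
  obtain ⟨k, hk, rfl⟩ := exists_eq_add_mul_of_column_eq (t := 0) (by simpa using h)
  have := hf.lt_of_eq_add_mul (Ne.symm hne) (by omega) hy (t := 0) (s := k) (by push_cast; ring)
  omega

lemma IsIndepBroadcast.eq_zero_of_column_eq_add_one (hf : IsIndepBroadcast (q * a) a f)
    (ha : a ≠ 1) {x y : ZMod (q * a)} (hx : f x = q) (h : column q a y = column q a x + 1) : f y = 0 := by
  by_contra hy
  obtain ⟨k, hk, rfl⟩ := exists_eq_add_mul_of_column_eq (t := 1) (by simpa using h)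
  have hne : x ≠ x + (1 : ℕ) + k * a := by
    intro he
    rw [← he] at h
    exact ha (ZMod.one_eq_zero_iff.1 (by simpa using h))
  have := hf.lt_of_eq_add_mul hne (by omega) (Nat.pos_of_ne_zero hy) (t := 1) (s := k)
    (by push_cast; ring)
  omega

lemma IsIndepBroadcast.sum_column_le (hf : IsIndepBroadcast (q * a) a f) (hbd : ∀ v, f v ≤ q)
    (c : ZMod a) (hc : ∀ x, column q a x = c → f x ≠ q) :
    ∑ x with column q a x = c, f x ≤ q - 1 := by
  set T : Finset (ZMod (q * a)) := {x ∈ {x | column q a x = c} | 0 < f x}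
  have hsum : ∑ x with column q a x = c, f x = ∑ x ∈ T, f x :=
    (sum_filter_of_ne fun x _ hx => Nat.pos_of_ne_zero hx).symm
  rcases T.eq_empty_or_nonempty with hT | ⟨x₀, hx₀⟩
  · simp [hsum, hT]
  have hmem : ∀ x ∈ T, column q a x = c ∧ 0 < f x := fun x hx => by simpa [T] using hx
  have ha : a ≠ 0 := right_ne_zero_of_mul (NeZero.ne (q * a))
  have hpack : ∑ x ∈ T, (f x + 1) ≤ q := by
    refine (sum_le_addOrderOf_of_arcs (g := (a : ZMod (q * a))) (x₀ := x₀) (fun x hx => ?_)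
      (fun x hx => ?_) ?_).trans_eq (addOrderOf_natCast_mul ha)
    · obtain ⟨k, -, hk⟩ := exists_eq_add_mul_of_column_eq (t := 0)
        (x := x₀) (y := x) (by simp [(hmem x hx).1, (hmem x₀ hx₀).1])
      exact ⟨k, by simpa using hk⟩
    · rw [addOrderOf_natCast_mul ha]
      have := hc x (hmem x hx).1
      have := hbd x
      omega
    · intro x hx y hy hxy d hd hyx
      have := hf.lt_of_eq_add_mul hxy (hmem x hx).2 (hmem y hy).2 (t := 0) (s := d)
        (by rw [hyx]; push_cast; ring)
      omega
  rw [sum_add_distrib, sum_const, smul_eq_mul, mul_one] at hpack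
  have := card_pos.2 ⟨x₀, hx₀⟩
  omega

lemma IsIndepBroadcast.sum_column_add_le (hf : IsIndepBroadcast (q * a) a f)
    (hbd : ∀ v, f v ≤ q) (ha : a ≠ 1) (c : ZMod a) :
    ∑ x with column q a x = c, f x +
        (q - 1) * (if c ∈ ({v | f v = q} : Finset _).image (column q a · + 1) then 1 else 0) ≤
      q - 1 + if c ∈ ({v | f v = q} : Finset _).image (column q a) then 1 else 0 := by
  have hq : 0 < q := Nat.pos_of_ne_zero (left_ne_zero_of_mul (NeZero.ne (q * a)))
  by_cases hc₁ : c ∈ ({v | f v = q} : Finset _).image (column q a · + 1)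
  · obtain ⟨x, hx, rfl⟩ := mem_image.1 hc₁
    have hzero : ∑ y with column q a y = column q a x + 1, f y = 0 :=
      sum_eq_zero fun y hy => hf.eq_zero_of_column_eq_add_one ha (mem_filter.1 hx).2
        (mem_filter.1 hy).2
    rw [if_pos hc₁, hzero]
    omega
  rw [if_neg hc₁, mul_zero, add_zero]
  by_cases hc₂ : c ∈ ({v | f v = q} : Finset _).image (column q a)
  · obtain ⟨x, hx, rfl⟩ := mem_image.1 hc₂
    have hxq : f x = q := (mem_filter.1 hx).2
    have hsingle : ∑ y with column q a y = column q a x, f y = f x :=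
      sum_eq_single_of_mem x (by simp) fun y hy hyx => by
        by_contra hy0
        exact hyx (hf.eq_of_column_eq hxq (Nat.pos_of_ne_zero hy0) (mem_filter.1 hy).2)
    rw [if_pos hc₂, hsingle, hxq]
    omega
  · exact (hf.sum_column_le hbd c fun x hx hxq =>
      hc₂ (mem_image.2 ⟨x, by simp [hxq], hx⟩)).trans (Nat.le_add_right _ _)

theorem IsIndepBroadcast.sum_add_le_of_dvd (hf : IsIndepBroadcast (q * a) a f)
    (hbd : ∀ v, f v ≤ q) (ha : a ≠ 1) :
    ∑ v, f v + (q - 1) * #{v | f v = q} ≤ (q - 1) * a + #{v | f v = q} := by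
  have : NeZero a := ⟨right_ne_zero_of_mul (NeZero.ne (q * a))⟩
  have hq : 0 < q := Nat.pos_of_ne_zero (left_ne_zero_of_mul (NeZero.ne (q * a)))
  set V : Finset (ZMod (q * a)) := {v | f v = q}
  have hinj : Set.InjOn (column q a) V := fun x hx y hy h =>
    (hf.eq_of_column_eq (mem_filter.1 hx).2 (by simp [(mem_filter.1 hy).2, hq]) h.symm).symm
  have hcard₁ : #(V.image (column q a)) = #V := card_image_of_injOn hinj
  have hcard₂ : #(V.image (column q a · + 1)) = #V :=
    card_image_of_injOn ((add_left_injective 1).injOn.comp hinj (Set.mapsTo_univ _ _))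
  calc ∑ v, f v + (q - 1) * #V
      = ∑ c, (∑ x with column q a x = c, f x +
          (q - 1) * if c ∈ V.image (column q a · + 1) then 1 else 0) := by
        rw [sum_add_distrib, sum_fiberwise, ← mul_sum, sum_boole, filter_mem_eq_inter, univ_inter,
          hcard₂, Nat.cast_id]
    _ ≤ ∑ c, (q - 1 + if c ∈ V.image (column q a) then 1 else 0) :=
        sum_le_sum fun c _ => hf.sum_column_add_le hbd ha c
    _ = (q - 1) * a + #V := by
        rw [sum_add_distrib, sum_boole, filter_mem_eq_inter, univ_inter, hcard₁, Nat.cast_id,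
          sum_const, card_univ, ZMod.card, smul_eq_mul, mul_comm]

end Divisible

section Unit

def arcLength (q k : ℕ) : ℕ := if k = 0 then 0 else if k = q then 2 * q + 1 else k + 1

lemma mul_add_le_mul_arcLength {q k : ℕ} (hk : k ≤ q) :
    (q : ℤ) * k + (q ^ 2 - q - 1) * (if k = q then 1 else 0) ≤ (q - 1) * arcLength q k := by
  unfold arcLength
  split_ifs with h0 hq <;> subst_vars <;> push_cast
  · nlinarith
  · nlinarith
  · have : (k : ℤ) + 1 ≤ q := by omega
    nlinarith

variable {n a q : ℕ} [NeZero n] {f : ZMod n → ℕ}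

lemma addOrderOf_natCast_of_mul_eq_one (hunit : (a : ZMod n) * (q + 1) = 1) :
    addOrderOf (a : ZMod n) = n := by
  have hcop := (ZMod.isUnit_iff_coprime a n).1 (.of_mul_eq_one _ hunit)
  rw [ZMod.addOrderOf_coe a (NeZero.ne n), Nat.gcd_comm, hcop, Nat.div_one]

lemma IsIndepBroadcast.sum_arcLength_le (hf : IsIndepBroadcast n a f) (hbd : ∀ v, f v ≤ q)
    (hunit : (a : ZMod n) * (q + 1) = 1) (hn : 2 * q + 1 ≤ n) :
    ∑ v, arcLength q (f v) ≤ n := by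
  set T : Finset (ZMod n) := {v | 0 < f v}
  have hT : ∑ v ∈ T, arcLength q (f v) = ∑ v, arcLength q (f v) :=
    sum_filter_of_ne fun v _ hv => Nat.pos_of_ne_zero fun h => hv (by simp [arcLength, h])
  have hord := addOrderOf_natCast_of_mul_eq_one hunit
  rw [← hT]
  refine (sum_le_addOrderOf_of_arcs (g := (a : ZMod n)) (x₀ := 0) (fun x _ => ?_)
    (fun x _ => ?_) ?_).trans_eq hord
  · refine ⟨x.val * (q + 1), ?_⟩
    rw [zero_add, nsmul_eq_mul, Nat.cast_mul, Nat.cast_succ, mul_assoc, mul_comm _ (a : ZMod n),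
      hunit, mul_one, ZMod.natCast_zmod_val]
  · rw [hord]
    have := hbd x
    unfold arcLength
    split_ifs <;> omega
  · intro x hx y hy hxy d hd hyx
    have hx₀ : 0 < f x := (mem_filter.1 hx).2
    have hy₀ : 0 < f y := (mem_filter.1 hy).2
    have hxq := hbd x
    by_cases hdx : d ≤ f x
    · have := hf.lt_of_eq_add_mul hxy hx₀ hy₀ (t := 0) (s := d) (by rw [hyx]; push_cast; ring)
      omega
    · have hfx : f x = q := by
        by_contra h
        simp only [arcLength, if_neg hx₀.ne', if_neg h] at hd
        omega
      simp only [arcLength, if_neg hx₀.ne', if_pos hfx] at hd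
      have := hf.lt_of_eq_add_mul hxy hx₀ hy₀ (t := 1) (s := d - (q + 1)) <| by
        rw [hyx, nsmul_eq_mul, Int.cast_natCast]
        push_cast [Nat.cast_sub (show q + 1 ≤ d by omega)]
        linear_combination hunit
      omega

theorem IsIndepBroadcast.mul_sum_add_le_of_mul_eq_one (hf : IsIndepBroadcast n a f)
    (hbd : ∀ v, f v ≤ q) (hunit : (a : ZMod n) * (q + 1) = 1) (hn : 2 * q + 1 ≤ n)
    (hq : 1 ≤ q) :
    (q : ℤ) * (∑ v, f v : ℕ) + (q ^ 2 - q - 1) * #{v | f v = q} ≤ (q - 1) * n := by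
  calc (q : ℤ) * (∑ v, f v : ℕ) + (q ^ 2 - q - 1) * #{v | f v = q}
      = ∑ v, ((q : ℤ) * f v + (q ^ 2 - q - 1) * if f v = q then 1 else 0) := by
        rw [sum_add_distrib, ← mul_sum, ← mul_sum, card_filter]
        push_cast
        rfl
    _ ≤ ∑ v, ((q : ℤ) - 1) * arcLength q (f v) :=
        sum_le_sum fun v _ => mul_add_le_mul_arcLength (hbd v)
    _ ≤ (q - 1) * n := by
        rw [← mul_sum]
        gcongr
        · linarith [(Nat.one_le_cast (α := ℤ)).2 hq]
        · exact_mod_cast hf.sum_arcLength_le hbd hunit hn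

end Unit

theorem stmt15_general (n a q r : ℕ) (hn : n = q * a + r)
    (hq : 3 ≤ q) (hqa : q < a - 1)
    (f : ZMod n → ℕ) (hf : IsIndepBroadcast n (a : ℤ) f)
    (hbd : ∀ v, f v ≤ q) :
    (r = 0 →
      (circCost n f : ℤ) ≤
        ((q : ℤ) - 1) * (n : ℤ) / (q : ℤ) -
          ((q : ℤ) - 2) * ((Finset.range n).filter (fun i : ℕ => f (i : ZMod n) = q)).card) ∧
    (r = a - 1 →
      (circCost n f : ℤ) ≤
        ((q : ℤ) - 1) * ((n : ℤ) -
            ((Finset.range n).filter (fun i : ℕ => f (i : ZMod n) = q)).card) / (q : ℤ) -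
          ((q : ℤ) - 2) * ((Finset.range n).filter (fun i : ℕ => f (i : ZMod n) = q)).card) := by
  have : NeZero n := ⟨by
    have : 0 < q * a := Nat.mul_pos (by omega) (by omega)
    omega⟩
  have hq₀ : (0 : ℤ) < q := by omega
  rw [circCost, ZMod.sum_range_natCast, ZMod.card_filter_range_natCast (f · = q)]
  constructor
  · rintro rfl
    obtain rfl : n = q * a := hn
    have key := hf.sum_add_le_of_dvd hbd (by omega)
    generalize ∑ v, f v = S at key ⊢
    generalize #{v | f v = q} = m at key ⊢
    zify [show 1 ≤ q by omega] at key
    refine le_ediv_sub_of_mul_le hq₀ ?_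
    push_cast
    linear_combination (q : ℤ) * key
  · rintro rfl
    have hunit : (a : ZMod n) * (q + 1) = 1 := by
      have h : a * (q + 1) = n + 1 := by
        rw [hn, mul_add, mul_one, mul_comm]
        omega
      simpa using congrArg (Nat.cast : ℕ → ZMod n) h
    have key := hf.mul_sum_add_le_of_mul_eq_one hbd hunit (by
      have : q * 2 ≤ q * a := Nat.mul_le_mul_left _ (by omega)
      omega) (by omega)
    exact le_ediv_sub_of_mul_le hq₀ (by linear_combination key)

theorem stmt15 (n a q r : ℕ) (hn : n = q * a + r) (hr : r = 0 ∨ r = a - 1)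
    (hq : 3 ≤ q) (hqa : q < a - 1)
    (f : ZMod n → ℕ) (hf : IsIndepBroadcast n (a : ℤ) f)
    (hbd : ∀ v, f v ≤ q) :
    (r = 0 →
      (circCost n f : ℤ) ≤
        ((q : ℤ) - 1) * (n : ℤ) / (q : ℤ) -
          ((q : ℤ) - 2) * ((Finset.range n).filter (fun i : ℕ => f (i : ZMod n) = q)).card) ∧
    (r = a - 1 →
      (circCost n f : ℤ) ≤
        ((q : ℤ) - 1) * ((n : ℤ) -
            ((Finset.range n).filter (fun i : ℕ => f (i : ZMod n) = q)).card) / (q : ℤ) -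
          ((q : ℤ) - 2) * ((Finset.range n).filter (fun i : ℕ => f (i : ZMod n) = q)).card) :=
  stmt15_general n a q r hn hq hqa f hf hbd
end
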